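/- arXiv:1112.5215 — 4 statements merged into one kernel-verified Lean document; each statement's English description precedes it below -/
import Mathlib

section
/- Let P be an orthogonal projector (P² = P = Pᵀ) and A a real matrix. Then for every nonnegative integer q, ‖P A‖ ≤ ‖P (A Aᵀ)^q A‖^{1/(2q+1)}, where ‖·‖ is the spectral norm. -/
open Matrix MeasureTheory ProbabilityTheory

noncomputable def specNorm {m n : Type*} [Fintype m] [Fintype n] [DecidableEq n]
    (A : Matrix m n ℝ) : ℝ :=
  ‖(Matrix.toEuclideanLin A).toContinuousLinearMap‖

noncomputable def frobNorm {m n : Type*} [Fintype m] [Fintype n] (A : Matrix m n ℝ) : ℝ :=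
  Real.sqrt (∑ i, ∑ j, (A i j) ^ 2)

/-- Moore–Penrose pseudoinverse of a full-row-rank matrix: `B† = Bᵀ (B Bᵀ)⁻¹`. -/
noncomputable def pinvFR {r k : Type*} [Fintype r] [Fintype k] [DecidableEq r]
    (B : Matrix r k ℝ) : Matrix k r ℝ :=
  Bᵀ * (B * Bᵀ)⁻¹

instance matMS (m n : ℕ) : MeasurableSpace (Matrix (Fin m) (Fin n) ℝ) :=
  (inferInstance : MeasurableSpace (Fin m → Fin n → ℝ))

/-- The law of an `m × n` random matrix with i.i.d. standard Gaussian entries. -/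
noncomputable def stdGaussian (m n : ℕ) : Measure (Matrix (Fin m) (Fin n) ℝ) :=
  (Measure.pi fun _ : Fin m => Measure.pi fun _ : Fin n => gaussianReal 0 1 :
    Measure (Fin m → Fin n → ℝ))

/-!
Let `R` be the Hermitian square root of `A Aᴴ`. Both `P (A Aᴴ)^q A` and `R^(2q+1) P` have Gram
matrix `P (A Aᴴ)^(2q+1) P`, so they have the same norm. The C*-identity makes `j ↦ ‖R^j P‖`
log-convex, and its value at `j = 0` is `‖P‖ ≤ 1`, whence `‖R P‖^(2q+1) ≤ ‖R^(2q+1) P‖`.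
-/

open scoped Matrix.Norms.L2Operator

section LogConvex

variable {α : Type*} [Field α] [LinearOrder α] [IsStrictOrderedRing α]

/-- The ratios `d (j + 1) / d j` of a log-convex sequence increase; stated without division so
that zero terms are allowed. -/
lemma mul_le_mul_of_sq_le_mul {d : ℕ → α} (hd : ∀ j, 0 ≤ d j)
    (hconv : ∀ j, d (j + 1) ^ 2 ≤ d j * d (j + 2)) (j : ℕ) :
    d 1 * d (j + 1) ≤ d 0 * d (j + 2) := by
  induction j with
  | zero => simpa [sq] using hconv 0
  | succ j ih =>
    rcases (hd (j + 2)).eq_or_lt with h0 | hpos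
    · rw [← h0, mul_zero]
      exact mul_nonneg (hd 0) (hd _)
    · refine le_of_mul_le_mul_right ?_ hpos
      calc d 1 * d (j + 2) * d (j + 2) ≤ d 1 * (d (j + 1) * d (j + 3)) := by
            rw [mul_assoc, ← sq]
            exact mul_le_mul_of_nonneg_left (hconv (j + 1)) (hd 1)
        _ = d 1 * d (j + 1) * d (j + 3) := by ring
        _ ≤ d 0 * d (j + 2) * d (j + 3) := mul_le_mul_of_nonneg_right ih (hd _)
        _ = d 0 * d (j + 3) * d (j + 2) := by ring

lemma pow_succ_le_pow_mul_of_sq_le_mul {d : ℕ → α} (hd : ∀ j, 0 ≤ d j)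
    (hconv : ∀ j, d (j + 1) ^ 2 ≤ d j * d (j + 2)) (k : ℕ) :
    d 1 ^ (k + 1) ≤ d 0 ^ k * d (k + 1) := by
  induction k with
  | zero => simp
  | succ k ih =>
    calc d 1 ^ (k + 2) = d 1 * d 1 ^ (k + 1) := by ring
      _ ≤ d 1 * (d 0 ^ k * d (k + 1)) := mul_le_mul_of_nonneg_left ih (hd 1)
      _ = d 0 ^ k * (d 1 * d (k + 1)) := by ring
      _ ≤ d 0 ^ k * (d 0 * d (k + 2)) :=
          mul_le_mul_of_nonneg_left (mul_le_mul_of_sq_le_mul hd hconv k) (pow_nonneg (hd 0) k)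
      _ = d 0 ^ (k + 1) * d (k + 2) := by ring

end LogConvex

lemma CStarRing.norm_pow_succ_mul_sq_le {E : Type*} [NormedRing E] [StarRing E] [CStarRing E]
    {r : E} (hr : IsSelfAdjoint r) (p : E) (j : ℕ) :
    ‖r ^ (j + 1) * p‖ ^ 2 ≤ ‖r ^ j * p‖ * ‖r ^ (j + 2) * p‖ := by
  have hstar :
      star (r ^ (j + 1) * p) * (r ^ (j + 1) * p) = star (r ^ j * p) * (r ^ (j + 2) * p) := by
    simp only [star_mul, (hr.pow _).star_eq, mul_assoc, ← mul_assoc (r ^ _) (r ^ _), ← pow_add]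
    ring_nf
  calc ‖r ^ (j + 1) * p‖ ^ 2 = ‖star (r ^ j * p) * (r ^ (j + 2) * p)‖ := by
        rw [sq, ← CStarRing.norm_star_mul_self, hstar]
    _ ≤ ‖r ^ j * p‖ * ‖r ^ (j + 2) * p‖ := by
        simpa only [norm_star] using norm_mul_le (star (r ^ j * p)) (r ^ (j + 2) * p)

namespace Matrix

variable {𝕜 : Type*} [RCLike 𝕜] {l m n : Type*} [Fintype l] [Fintype m] [Fintype n]
  [DecidableEq m]

lemma l2_opNorm_eq_of_mul_conjTranspose_eq [DecidableEq n] {X : Matrix m n 𝕜}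
    {Y : Matrix l m 𝕜} (h : X * Xᴴ = Yᴴ * Y) : ‖X‖ = ‖Y‖ := by
  have hsq : ‖X‖ * ‖X‖ = ‖Y‖ * ‖Y‖ := by
    rw [← l2_opNorm_conjTranspose X, ← l2_opNorm_conjTranspose_mul_self,
      conjTranspose_conjTranspose, h, l2_opNorm_conjTranspose_mul_self]
  exact (mul_self_inj (norm_nonneg X) (norm_nonneg Y)).mp hsq

open scoped MatrixOrder ComplexOrder in
lemma exists_isHermitian_mul_self_eq_mul_conjTranspose (A : Matrix m n 𝕜) :
    ∃ R : Matrix m m 𝕜, R.IsHermitian ∧ R * R = A * Aᴴ :=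
  ⟨CFC.sqrt _, (CFC.sqrt_nonneg _).posSemidef.1,
    CFC.sqrt_mul_sqrt_self _ (posSemidef_self_mul_conjTranspose A).nonneg⟩

/-- `P (A Aᴴ)^q A` and `R^(2q+1) P` have the same Gram matrix `P (A Aᴴ)^(2q+1) P`. -/
lemma l2_opNorm_mul_pow_mul_eq [DecidableEq n] {P R : Matrix m m 𝕜} (A : Matrix m n 𝕜)
    (hP : P.IsHermitian) (hR : R.IsHermitian) (hRR : R * R = A * Aᴴ) (q : ℕ) :
    ‖P * (A * Aᴴ) ^ q * A‖ = ‖R ^ (2 * q + 1) * P‖ := by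
  apply l2_opNorm_eq_of_mul_conjTranspose_eq
  have hS : (A * Aᴴ).IsHermitian := isHermitian_mul_conjTranspose_self A
  rw [conjTranspose_mul, conjTranspose_mul, conjTranspose_mul, (hS.pow q).eq, hP.eq,
    (hR.pow _).eq]
  calc P * (A * Aᴴ) ^ q * A * (Aᴴ * ((A * Aᴴ) ^ q * P))
      = P * ((A * Aᴴ) ^ q * (A * Aᴴ) * (A * Aᴴ) ^ q) * P := by
        simp only [Matrix.mul_assoc]
    _ = P * (R * R) ^ (2 * q + 1) * P := by
        rw [← pow_succ, ← pow_add, hRR, two_mul, add_right_comm]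
    _ = P * R ^ (2 * q + 1) * (R ^ (2 * q + 1) * P) := by
        rw [← sq, ← pow_mul, two_mul (2 * q + 1), pow_add]
        simp only [Matrix.mul_assoc]

end Matrix

/-- Power scheme norm inequality:  for an orthogonal
projector . -/
theorem specNorm_proj_le_pow {m n : ℕ} (P : Matrix (Fin m) (Fin m) ℝ)
    (A : Matrix (Fin m) (Fin n) ℝ) (hP : P * P = P) (hPt : Pᵀ = P) (q : ℕ) :
    specNorm (P * A) ≤ specNorm (P * (A * Aᵀ) ^ q * A) ^ ((1 : ℝ) / (2 * q + 1)) := by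
  change ‖P * A‖ ≤ ‖P * (A * Aᵀ) ^ q * A‖ ^ ((1 : ℝ) / (2 * q + 1))
  rw [← conjTranspose_eq_transpose_of_trivial] at hPt ⊢
  obtain ⟨R, hR, hRR⟩ := exists_isHermitian_mul_self_eq_mul_conjTranspose A
  have hP_norm : ‖R ^ 0 * P‖ ≤ 1 := by
    simpa using IsStarProjection.norm_le P ⟨hP, hPt⟩
  have hpow := pow_succ_le_pow_mul_of_sq_le_mul (d := fun j => ‖R ^ j * P‖)
    (fun _ => norm_nonneg _) (CStarRing.norm_pow_succ_mul_sq_le hR P) (2 * q)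
  have hPA : ‖P * A‖ = ‖R ^ 1 * P‖ := by
    simpa using l2_opNorm_mul_pow_mul_eq A hPt hR hRR 0
  rw [hPA, l2_opNorm_mul_pow_mul_eq A hPt hR hRR q, one_div,
    Real.le_rpow_inv_iff_of_pos (norm_nonneg _) (norm_nonneg _) (by positivity)]
  have hcast : ((2 * q + 1 : ℕ) : ℝ) = 2 * q + 1 := by push_cast; ring
  rw [← hcast, Real.rpow_natCast]
  calc ‖R ^ 1 * P‖ ^ (2 * q + 1) ≤ ‖R ^ 0 * P‖ ^ (2 * q) * ‖R ^ (2 * q + 1) * P‖ := hpow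
    _ ≤ ‖R ^ (2 * q + 1) * P‖ :=
        mul_le_of_le_one_left (norm_nonneg _) (pow_le_one₀ (norm_nonneg _) hP_norm)
end

section
/- For any matrix H, the orthogonal projector onto the range of the block matrix N = [I; H] (stacked vertically) satisfies I - P_N ⪯ [[HᵀH, -(I+HᵀH)⁻¹Hᵀ], [-H(I+HᵀH)⁻¹, I]] in the Loewner order. -/
open Matrix MeasureTheory ProbabilityTheory

/-!
With `G = 1 + HᵀH = NᵀN`, the projector `P_N` has the blocks `G⁻¹, G⁻¹Hᵀ, HG⁻¹, HG⁻¹Hᵀ`. The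
off-diagonal blocks of the difference cancel, and by `A(1 + A)⁻¹A = A - 1 + (1 + A)⁻¹` its
diagonal blocks are `HᵀH G⁻¹ HᵀH` and `H G⁻¹ Hᵀ`, both congruences of the positive semidefinite
matrix `G⁻¹`.
-/

namespace Matrix

variable {l m n o R : Type*}

lemma fromBlocks_sub [Sub R] (A : Matrix n l R) (B : Matrix n m R)
    (C : Matrix o l R) (D : Matrix o m R) (A' : Matrix n l R) (B' : Matrix n m R)
    (C' : Matrix o l R) (D' : Matrix o m R) :
    fromBlocks A B C D - fromBlocks A' B' C' D' =
      fromBlocks (A - A') (B - B') (C - C') (D - D') := by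
  ext (i | i) (j | j) <;> rfl

variable [Fintype m] [Fintype n]

lemma PosSemidef.fromBlocks_diag [Ring R] [PartialOrder R] [StarRing R] [AddLeftMono R]
    {A : Matrix m m R} {D : Matrix n n R} (hA : A.PosSemidef) (hD : D.PosSemidef) :
    (fromBlocks A 0 0 D).PosSemidef := by
  rw [posSemidef_iff_dotProduct_mulVec] at hA hD ⊢
  refine ⟨hA.1.fromBlocks (by simp) hD.1, fun x => ?_⟩
  simpa [dotProduct_block, fromBlocks_mulVec, Function.comp_def, Pi.star_def] using
    add_nonneg (hA.2 (x ∘ Sum.inl)) (hD.2 (x ∘ Sum.inr))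

variable [DecidableEq n] [CommRing R]

lemma mul_inv_one_add_mul {A : Matrix n n R} (h : IsUnit (1 + A).det) :
    A * (1 + A)⁻¹ * A = A - 1 + (1 + A)⁻¹ := by
  set G := 1 + A with hG
  have hA : A = G - 1 := by rw [hG]; abel
  rw [hA]
  simp only [Matrix.sub_mul, Matrix.mul_sub, Matrix.one_mul, Matrix.mul_one,
    mul_nonsing_inv _ h, nonsing_inv_mul _ h]
  abel

lemma transpose_fromRows_one_mul_self (H : Matrix m n R) :
    (fromRows (1 : Matrix n n R) H)ᵀ * fromRows (1 : Matrix n n R) H = 1 + Hᵀ * H := by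
  rw [transpose_fromRows, fromCols_mul_fromRows, transpose_one, Matrix.one_mul]

lemma fromRows_one_mul_inv_mul_transpose (H : Matrix m n R) :
    fromRows (1 : Matrix n n R) H *
        ((fromRows (1 : Matrix n n R) H)ᵀ * fromRows (1 : Matrix n n R) H)⁻¹ *
        (fromRows (1 : Matrix n n R) H)ᵀ =
      fromBlocks (1 + Hᵀ * H)⁻¹ ((1 + Hᵀ * H)⁻¹ * Hᵀ) (H * (1 + Hᵀ * H)⁻¹)
        (H * (1 + Hᵀ * H)⁻¹ * Hᵀ) := by
  rw [transpose_fromRows_one_mul_self, transpose_fromRows, fromRows_mul, fromRows_mul_fromCols]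
  simp only [Matrix.one_mul, transpose_one, Matrix.mul_one]

end Matrix

/-- For  stacked vertically,
. -/
theorem one_sub_proj_le_blocks {r s : ℕ} (H : Matrix (Fin s) (Fin r) ℝ) :
    (Matrix.fromBlocks (Hᵀ * H) (-((1 + Hᵀ * H)⁻¹ * Hᵀ)) (-(H * (1 + Hᵀ * H)⁻¹)) 1 -
        (1 - Matrix.fromRows (1 : Matrix (Fin r) (Fin r) ℝ) H *
          ((Matrix.fromRows (1 : Matrix (Fin r) (Fin r) ℝ) H)ᵀ *
            Matrix.fromRows (1 : Matrix (Fin r) (Fin r) ℝ) H)⁻¹ *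
          (Matrix.fromRows (1 : Matrix (Fin r) (Fin r) ℝ) H)ᵀ)).PosSemidef := by
  have hHH : (Hᵀ * H).PosSemidef := posSemidef_conjTranspose_mul_self H
  have hG_unit : IsUnit (1 + Hᵀ * H).det :=
    (isUnit_iff_isUnit_det _).mp (PosDef.one.add_posSemidef hHH).isUnit
  have hGinv : (1 + Hᵀ * H)⁻¹.PosSemidef := (PosSemidef.one.add hHH).inv
  have hTL : Hᵀ * H - (1 - (1 + Hᵀ * H)⁻¹) = Hᵀ * H * (1 + Hᵀ * H)⁻¹ * (Hᵀ * H) := by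
    rw [mul_inv_one_add_mul hG_unit]; abel
  rw [fromRows_one_mul_inv_mul_transpose, ← fromBlocks_one, fromBlocks_sub, fromBlocks_sub]
  simp only [hTL, zero_sub, sub_neg_eq_add, neg_add_cancel, sub_sub_cancel]
  refine PosSemidef.fromBlocks_diag ?_ (hGinv.mul_mul_conjTranspose_same H)
  simpa [transpose_mul, Matrix.mul_assoc] using hGinv.conjTranspose_mul_mul_same (Hᵀ * H)
end

section
/- Deterministic error bound: Let X be an m×n real matrix (m ≥ n) with SVD X = U₁Λ₁V₁ᵀ + U₂Λ₂V₂ᵀ where Λ₁ contains the largest r singular values. Let A₁ be an n×(r+p) matrix such that V₁ᵀA₁ has full row rank, and set L = Y₁(A₂ᵀY₁)⁻¹Y₂ᵀ where A₂ = XA₁, Y₂ = XᵀA₂, and Y₁ = XY₂ (assuming A₂ᵀY₁ is invertible). Then ‖X - L‖² ≤ ‖Λ₂²(V₂ᵀA₁)(V₁ᵀA₁)†Λ₁⁻¹‖² + ‖Λ₂‖². -/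
open Matrix MeasureTheory ProbabilityTheory

/-!
Write `Y₂ = XᵀX A₁` for the sketch. Then `L = X P` with `P` the orthogonal projection onto the
column space of `Y₂`, so `X - L = X (1 - P)`, and splitting along the orthonormal blocks `U₁, U₂`
gives `‖X - L‖² ≤ ‖Λ₁ V₁ᵀ (1 - P)‖² + ‖Λ₂ V₂ᵀ (1 - P)‖²`. The second term is at most `‖Λ₂‖²`.
For the first, `Y₂ (V₁ᵀA₁)† Λ₁⁻¹ = V₁ Λ₁ + V₂ G` with `G = Λ₂² (V₂ᵀA₁)(V₁ᵀA₁)† Λ₁⁻¹`, and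
`1 - P` kills the column space of `Y₂`, so `(1 - P) V₁ Λ₁ = -(1 - P) V₂ G` has norm at most `‖G‖`.
-/

open scoped Matrix.Norms.L2Operator

lemma specNorm_eq_norm {m n : Type*} [Fintype m] [Fintype n] [DecidableEq n]
    (A : Matrix m n ℝ) : specNorm A = ‖A‖ := rfl

namespace Matrix

variable {m n r s a b k : Type*} [Fintype m] [Fintype n] [Fintype r] [Fintype s] [Fintype a]
  [Fintype b] [Fintype k]

omit [Fintype n] in
lemma star_eq_transpose_of_real (A : Matrix n n ℝ) : star A = Aᵀ := by
  rw [star_eq_conjTranspose, conjTranspose_eq_transpose_of_trivial]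

lemma l2_opNorm_transpose [DecidableEq m] [DecidableEq n] (A : Matrix m n ℝ) : ‖Aᵀ‖ = ‖A‖ := by
  simpa only [conjTranspose_eq_transpose_of_trivial] using l2_opNorm_conjTranspose A

lemma l2_opNorm_transpose_mul_self [DecidableEq n] (A : Matrix m n ℝ) :
    ‖Aᵀ * A‖ = ‖A‖ * ‖A‖ := by
  simpa only [conjTranspose_eq_transpose_of_trivial] using l2_opNorm_conjTranspose_mul_self A

lemma l2_opNorm_le_one_of_transpose_mul_self_eq_one [DecidableEq n] {V : Matrix m n ℝ}
    (hV : Vᵀ * V = 1) : ‖V‖ ≤ 1 := by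
  have h : ‖V‖ * ‖V‖ ≤ 1 := by
    rw [← l2_opNorm_transpose_mul_self, hV]
    exact IsStarProjection.norm_le _ (.one _)
  nlinarith [norm_nonneg V]

section Orthonormal

variable [DecidableEq r] [DecidableEq s] {U₁ : Matrix m r ℝ} {U₂ : Matrix m s ℝ}

omit [Fintype n] in
lemma transpose_mul_self_of_orthonormal (hU₁ : U₁ᵀ * U₁ = 1) (hU₂ : U₂ᵀ * U₂ = 1)
    (hU₁₂ : U₁ᵀ * U₂ = 0) (M₁ : Matrix r n ℝ) (M₂ : Matrix s n ℝ) :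
    (U₁ * M₁ + U₂ * M₂)ᵀ * (U₁ * M₁ + U₂ * M₂) = M₁ᵀ * M₁ + M₂ᵀ * M₂ := by
  have hU₂₁ : U₂ᵀ * U₁ = 0 := by
    rw [← transpose_transpose U₁, ← transpose_mul, hU₁₂, transpose_zero]
  simp only [transpose_add, transpose_mul, Matrix.add_mul, Matrix.mul_add, Matrix.mul_assoc]
  simp only [← Matrix.mul_assoc U₁ᵀ, ← Matrix.mul_assoc U₂ᵀ, hU₁, hU₂, hU₁₂, hU₂₁,
    Matrix.one_mul, Matrix.zero_mul, Matrix.mul_zero, add_zero, zero_add]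

lemma l2_opNorm_sq_add_le_of_orthonormal [DecidableEq n] (hU₁ : U₁ᵀ * U₁ = 1)
    (hU₂ : U₂ᵀ * U₂ = 1) (hU₁₂ : U₁ᵀ * U₂ = 0) (M₁ : Matrix r n ℝ) (M₂ : Matrix s n ℝ) :
    ‖U₁ * M₁ + U₂ * M₂‖ ^ 2 ≤ ‖M₁‖ ^ 2 + ‖M₂‖ ^ 2 := by
  calc ‖U₁ * M₁ + U₂ * M₂‖ ^ 2 = ‖M₁ᵀ * M₁ + M₂ᵀ * M₂‖ := by
        rw [sq, ← l2_opNorm_transpose_mul_self,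
          transpose_mul_self_of_orthonormal hU₁ hU₂ hU₁₂]
    _ ≤ ‖M₁ᵀ * M₁‖ + ‖M₂ᵀ * M₂‖ := norm_add_le _ _
    _ = ‖M₁‖ ^ 2 + ‖M₂‖ ^ 2 := by rw [l2_opNorm_transpose_mul_self,
        l2_opNorm_transpose_mul_self, sq, sq]

end Orthonormal

lemma mul_pinvFR [DecidableEq r] {B : Matrix r k ℝ} (hB : IsUnit (B * Bᵀ)) :
    B * pinvFR B = 1 := by
  rw [pinvFR, ← Matrix.mul_assoc, mul_nonsing_inv _ ((isUnit_iff_isUnit_det _).mp hB)]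

noncomputable def colProj [DecidableEq k] (B : Matrix m k ℝ) : Matrix m m ℝ :=
  B * (Bᵀ * B)⁻¹ * Bᵀ

section colProj

variable [DecidableEq k] {B : Matrix m k ℝ}

lemma colProj_mul_self (hB : IsUnit (Bᵀ * B)) : colProj B * B = B := by
  rw [colProj, Matrix.mul_assoc, Matrix.mul_assoc,
    nonsing_inv_mul _ ((isUnit_iff_isUnit_det _).mp hB), Matrix.mul_one]

lemma isStarProjection_colProj (hB : IsUnit (Bᵀ * B)) : IsStarProjection (colProj B) where
  isIdempotentElem := by
    calc colProj B * colProj B = colProj B * B * (Bᵀ * B)⁻¹ * Bᵀ := by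
          simp only [colProj, Matrix.mul_assoc]
      _ = colProj B := by rw [colProj_mul_self hB, colProj]
  isSelfAdjoint := by
    rw [IsSelfAdjoint, star_eq_transpose_of_real, colProj]
    simp only [transpose_mul, transpose_transpose, transpose_nonsing_inv, Matrix.mul_assoc]

lemma one_sub_colProj_mul_self [DecidableEq m] (hB : IsUnit (Bᵀ * B)) :
    (1 - colProj B) * B = 0 := by
  rw [Matrix.sub_mul, Matrix.one_mul, colProj_mul_self hB, sub_self]

end colProj

theorem sq_l2_opNorm_mul_starProjection_le [DecidableEq n] [DecidableEq r] [DecidableEq s]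
    [DecidableEq a] [DecidableEq b] {U₁ : Matrix m r ℝ} {U₂ : Matrix m s ℝ} {S₁ : Matrix r a ℝ}
    {S₂ : Matrix s b ℝ} {V₁ : Matrix n a ℝ} {V₂ : Matrix n b ℝ} {G : Matrix b r ℝ}
    {Q : Matrix n n ℝ} (hU₁ : U₁ᵀ * U₁ = 1) (hU₂ : U₂ᵀ * U₂ = 1) (hU₁₂ : U₁ᵀ * U₂ = 0)
    (hV₂ : V₂ᵀ * V₂ = 1) (hQ : IsStarProjection Q) (hG : Q * (V₁ * S₁ᵀ + V₂ * G) = 0) :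
    ‖(U₁ * S₁ * V₁ᵀ + U₂ * S₂ * V₂ᵀ) * Q‖ ^ 2 ≤ ‖G‖ ^ 2 + ‖S₂‖ ^ 2 := by
  have hQ₁ : ‖Q‖ ≤ 1 := hQ.norm_le
  have hV₂₁ : ‖V₂‖ ≤ 1 := l2_opNorm_le_one_of_transpose_mul_self_eq_one hV₂
  have hQt : Qᵀ = Q := by rw [← star_eq_transpose_of_real, hQ.isSelfAdjoint.star_eq]
  have h₁ : ‖S₁ * V₁ᵀ * Q‖ ≤ ‖G‖ := by
    have hswap : (S₁ * V₁ᵀ * Q)ᵀ = -(Q * V₂ * G) := by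
      rw [eq_neg_iff_add_eq_zero, ← hG]
      simp only [transpose_mul, transpose_transpose, hQt, Matrix.mul_add, Matrix.mul_assoc]
    calc ‖S₁ * V₁ᵀ * Q‖ = ‖Q * V₂ * G‖ := by rw [← l2_opNorm_transpose, hswap, norm_neg]
      _ ≤ ‖Q‖ * ‖V₂‖ * ‖G‖ := (l2_opNorm_mul _ _).trans
          (mul_le_mul_of_nonneg_right (l2_opNorm_mul _ _) (norm_nonneg _))
      _ ≤ ‖G‖ := mul_le_of_le_one_left (norm_nonneg _) (mul_le_one₀ hQ₁ (norm_nonneg _) hV₂₁)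
  have h₂ : ‖S₂ * V₂ᵀ * Q‖ ≤ ‖S₂‖ := by
    calc ‖S₂ * V₂ᵀ * Q‖ ≤ ‖S₂‖ * ‖V₂ᵀ‖ * ‖Q‖ := (l2_opNorm_mul _ _).trans
          (mul_le_mul_of_nonneg_right (l2_opNorm_mul _ _) (norm_nonneg _))
      _ ≤ ‖S₂‖ := by
          rw [l2_opNorm_transpose, mul_assoc]
          exact mul_le_of_le_one_right (norm_nonneg _) (mul_le_one₀ hV₂₁ (norm_nonneg _) hQ₁)
  calc ‖(U₁ * S₁ * V₁ᵀ + U₂ * S₂ * V₂ᵀ) * Q‖ ^ 2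
      = ‖U₁ * (S₁ * V₁ᵀ * Q) + U₂ * (S₂ * V₂ᵀ * Q)‖ ^ 2 := by
        simp only [Matrix.add_mul, Matrix.mul_assoc]
    _ ≤ ‖S₁ * V₁ᵀ * Q‖ ^ 2 + ‖S₂ * V₂ᵀ * Q‖ ^ 2 :=
        l2_opNorm_sq_add_le_of_orthonormal hU₁ hU₂ hU₁₂ _ _
    _ ≤ ‖G‖ ^ 2 + ‖S₂‖ ^ 2 := by gcongr

end Matrix

theorem brp_deterministic_error_bound_general {m n r p : ℕ}
    (U₁ : Matrix (Fin m) (Fin r) ℝ) (U₂ : Matrix (Fin m) (Fin (n - r)) ℝ)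
    (V₁ : Matrix (Fin n) (Fin r) ℝ) (V₂ : Matrix (Fin n) (Fin (n - r)) ℝ)
    (Λ₁ : Fin r → ℝ) (Λ₂ : Fin (n - r) → ℝ)
    (hU₁ : U₁ᵀ * U₁ = 1) (hU₂ : U₂ᵀ * U₂ = 1) (hU₁₂ : U₁ᵀ * U₂ = 0)
    (hV₂ : V₂ᵀ * V₂ = 1)
    (hΛ₁pos : ∀ i, 0 < Λ₁ i)
    (X : Matrix (Fin m) (Fin n) ℝ)
    (hX : X = U₁ * Matrix.diagonal Λ₁ * V₁ᵀ + U₂ * Matrix.diagonal Λ₂ * V₂ᵀ)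
    (A₁ : Matrix (Fin n) (Fin (r + p)) ℝ)
    (hfr : IsUnit ((V₁ᵀ * A₁) * (V₁ᵀ * A₁)ᵀ))
    (A₂ : Matrix (Fin m) (Fin (r + p)) ℝ) (hA₂ : A₂ = X * A₁)
    (Y₂ : Matrix (Fin n) (Fin (r + p)) ℝ) (hY₂ : Y₂ = Xᵀ * A₂)
    (Y₁ : Matrix (Fin m) (Fin (r + p)) ℝ) (hY₁ : Y₁ = X * Y₂)
    (hinv : IsUnit (A₂ᵀ * Y₁))
    (L : Matrix (Fin m) (Fin n) ℝ) (hL : L = Y₁ * (A₂ᵀ * Y₁)⁻¹ * Y₂ᵀ) :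
    specNorm (X - L) ^ 2 ≤
      specNorm (Matrix.diagonal Λ₂ * Matrix.diagonal Λ₂ * (V₂ᵀ * A₁) *
          pinvFR (V₁ᵀ * A₁) * (Matrix.diagonal Λ₁)⁻¹) ^ 2 +
        specNorm (Matrix.diagonal Λ₂) ^ 2 := by
  have hgram : A₂ᵀ * Y₁ = Y₂ᵀ * Y₂ := by
    rw [hY₁, hY₂, hA₂]
    simp only [transpose_mul, transpose_transpose, Matrix.mul_assoc]
  have hresidual : X - L = X * (1 - colProj Y₂) := by
    rw [hL, hgram, hY₁, colProj, Matrix.mul_sub, Matrix.mul_one]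
    simp only [Matrix.mul_assoc]
  have hsketch : Y₂ = V₁ * (diagonal Λ₁ * diagonal Λ₁ * (V₁ᵀ * A₁)) +
      V₂ * (diagonal Λ₂ * diagonal Λ₂ * (V₂ᵀ * A₁)) := by
    rw [hY₂, hA₂, ← Matrix.mul_assoc, hX]
    simp only [Matrix.mul_assoc U₁, Matrix.mul_assoc U₂]
    rw [transpose_mul_self_of_orthonormal hU₁ hU₂ hU₁₂]
    simp only [transpose_mul, transpose_transpose, diagonal_transpose, Matrix.add_mul,
      Matrix.mul_assoc]
  have hD₁ : diagonal Λ₁ * (diagonal Λ₁)⁻¹ = 1 := mul_nonsing_inv _ ((isUnit_iff_isUnit_det _).mp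
    (isUnit_diagonal.mpr (Pi.isUnit_iff.mpr fun i => (hΛ₁pos i).ne'.isUnit)))
  have hrange : Y₂ * (pinvFR (V₁ᵀ * A₁) * (diagonal Λ₁)⁻¹) = V₁ * (diagonal Λ₁)ᵀ +
      V₂ * (diagonal Λ₂ * diagonal Λ₂ * (V₂ᵀ * A₁) * pinvFR (V₁ᵀ * A₁) * (diagonal Λ₁)⁻¹) := by
    rw [hsketch, diagonal_transpose]
    simp only [Matrix.add_mul, Matrix.mul_assoc]
    congr 1
    rw [← Matrix.mul_assoc V₁ᵀ, ← Matrix.mul_assoc (V₁ᵀ * A₁), mul_pinvFR hfr, Matrix.one_mul,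
      hD₁, Matrix.mul_one]
  have hY₂unit : IsUnit (Y₂ᵀ * Y₂) := hgram ▸ hinv
  rw [specNorm_eq_norm, specNorm_eq_norm, specNorm_eq_norm, hresidual, hX]
  refine sq_l2_opNorm_mul_starProjection_le hU₁ hU₂ hU₁₂ hV₂
    (isStarProjection_colProj hY₂unit).one_sub ?_
  rw [← hrange, ← Matrix.mul_assoc, one_sub_colProj_mul_self hY₂unit, Matrix.zero_mul]

/-- Deterministic error bound for the BRP low-rank approximation:
`‖X - L‖² ≤ ‖Λ₂² (V₂ᵀA₁)(V₁ᵀA₁)† Λ₁⁻¹‖² + ‖Λ₂‖²`. -/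
theorem brp_deterministic_error_bound {m n r p : ℕ} (hmn : n ≤ m) (hrn : r + 1 ≤ n)
    (hp : 2 ≤ p)
    (U₁ : Matrix (Fin m) (Fin r) ℝ) (U₂ : Matrix (Fin m) (Fin (n - r)) ℝ)
    (V₁ : Matrix (Fin n) (Fin r) ℝ) (V₂ : Matrix (Fin n) (Fin (n - r)) ℝ)
    (Λ₁ : Fin r → ℝ) (Λ₂ : Fin (n - r) → ℝ)
    (hU₁ : U₁ᵀ * U₁ = 1) (hU₂ : U₂ᵀ * U₂ = 1) (hU₁₂ : U₁ᵀ * U₂ = 0)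
    (hV₁ : V₁ᵀ * V₁ = 1) (hV₂ : V₂ᵀ * V₂ = 1) (hV₁₂ : V₁ᵀ * V₂ = 0)
    (hVfull : V₁ * V₁ᵀ + V₂ * V₂ᵀ = 1)
    (hΛ₁pos : ∀ i, 0 < Λ₁ i) (hΛ₂ : ∀ i, 0 ≤ Λ₂ i)
    (hdecay : ∀ i j, Λ₂ j ≤ Λ₁ i)
    (X : Matrix (Fin m) (Fin n) ℝ)
    (hX : X = U₁ * Matrix.diagonal Λ₁ * V₁ᵀ + U₂ * Matrix.diagonal Λ₂ * V₂ᵀ)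
    (A₁ : Matrix (Fin n) (Fin (r + p)) ℝ)
    (hfr : IsUnit ((V₁ᵀ * A₁) * (V₁ᵀ * A₁)ᵀ))
    (A₂ : Matrix (Fin m) (Fin (r + p)) ℝ) (hA₂ : A₂ = X * A₁)
    (Y₂ : Matrix (Fin n) (Fin (r + p)) ℝ) (hY₂ : Y₂ = Xᵀ * A₂)
    (Y₁ : Matrix (Fin m) (Fin (r + p)) ℝ) (hY₁ : Y₁ = X * Y₂)
    (hinv : IsUnit (A₂ᵀ * Y₁))
    (L : Matrix (Fin m) (Fin n) ℝ) (hL : L = Y₁ * (A₂ᵀ * Y₁)⁻¹ * Y₂ᵀ) :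
    specNorm (X - L) ^ 2 ≤
      specNorm (Matrix.diagonal Λ₂ * Matrix.diagonal Λ₂ * (V₂ᵀ * A₁) *
          pinvFR (V₁ᵀ * A₁) * (Matrix.diagonal Λ₁)⁻¹) ^ 2 +
        specNorm (Matrix.diagonal Λ₂) ^ 2 :=
  brp_deterministic_error_bound_general U₁ U₂ V₁ V₂ Λ₁ Λ₂ hU₁ hU₂ hU₁₂ hV₂ hΛ₁pos X hX A₁ hfr A₂ hA₂
    Y₂ hY₂ Y₁ hY₁ hinv L hL
end

section
/- Exact recovery via BRP: if X is an m×n real matrix of rank exactly r, A₁ ∈ ℝ^{n×r}, Y₁ = XA₁, A₂ = Y₁, Y₂ = XᵀA₂, and A₂ᵀY₁ is invertible, then L = Y₁(A₂ᵀY₁)⁻¹Y₂ᵀ = X. -/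
open Matrix MeasureTheory ProbabilityTheory

/-! Since `A₂ᵀ * Y₁` is an invertible `r × r` matrix, `Y₁ = X * A₁` has rank `r = rank X`, so the
columns of `Y₁` span the column space of `X` and `X = Y₁ * C` for some `C`. Then
`Y₂ᵀ = A₂ᵀ * X = (A₂ᵀ * Y₁) * C`, and the inverse cancels. -/

namespace Matrix

variable {R K : Type*} [CommSemiring R] [Field K] {m n k : Type*} [Fintype n] [Fintype k]

theorem rank_eq_card_width_of_isUnit_mul [Fintype m] [StrongRankCondition R] [DecidableEq k]
    {B : Matrix k m R} {Y : Matrix m k R} (h : IsUnit (B * Y)) : Y.rank = Fintype.card k :=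
  le_antisymm Y.rank_le_card_width (rank_of_isUnit _ h ▸ rank_mul_le_right B Y)

theorem range_mulVecLin_mul_eq_of_rank_eq (X : Matrix m n K) (A : Matrix n k K)
    (h : (X * A).rank = X.rank) :
    LinearMap.range (X * A).mulVecLin = LinearMap.range X.mulVecLin := by
  refine Submodule.eq_of_le_of_finrank_eq ?_ h
  rw [mulVecLin_mul]
  exact LinearMap.range_comp_le_range _ _

theorem exists_eq_mul_of_range_mulVecLin_le [DecidableEq n] {X : Matrix m n R} {Y : Matrix m k R}
    (h : LinearMap.range X.mulVecLin ≤ LinearMap.range Y.mulVecLin) :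
    ∃ C : Matrix k n R, X = Y * C := by
  have hcol (j : n) : ∃ c, Y *ᵥ c = X.col j := h ⟨Pi.single j 1, X.mulVec_single_one j⟩
  choose c hc using hcol
  refine ⟨(of c)ᵀ, ext fun i j => ?_⟩
  rw [← col_apply X j i, ← hc j]
  rfl

end Matrix

theorem brp_exact_recovery_general {m n r : ℕ} (X : Matrix (Fin m) (Fin n) ℝ)
    (hrank : X.rank = r) (A₁ : Matrix (Fin n) (Fin r) ℝ)
    (Y₁ : Matrix (Fin m) (Fin r) ℝ) (hY₁ : Y₁ = X * A₁)
    (A₂ : Matrix (Fin m) (Fin r) ℝ)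
    (Y₂ : Matrix (Fin n) (Fin r) ℝ) (hY₂ : Y₂ = Xᵀ * A₂)
    (hinv : IsUnit (A₂ᵀ * Y₁)) :
    Y₁ * (A₂ᵀ * Y₁)⁻¹ * Y₂ᵀ = X := by
  have hrankY₁ : (X * A₁).rank = X.rank := by
    rw [← hY₁, rank_eq_card_width_of_isUnit_mul hinv, hrank, Fintype.card_fin]
  obtain ⟨C, hXC⟩ : ∃ C, X = Y₁ * C :=
    hY₁ ▸ exists_eq_mul_of_range_mulVecLin_le (range_mulVecLin_mul_eq_of_rank_eq X A₁ hrankY₁).ge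
  subst hY₂
  calc Y₁ * (A₂ᵀ * Y₁)⁻¹ * (Xᵀ * A₂)ᵀ
      = Y₁ * ((A₂ᵀ * Y₁)⁻¹ * (A₂ᵀ * Y₁)) * C := by
        rw [transpose_mul, transpose_transpose, hXC]
        simp only [Matrix.mul_assoc]
    _ = Y₁ * C := by rw [nonsing_inv_mul _ ((isUnit_iff_isUnit_det _).mp hinv), Matrix.mul_one]
    _ = X := hXC.symm

/-- Exact recovery of a rank- matrix from bilateral random projections. -/
theorem brp_exact_recovery {m n r : ℕ} (X : Matrix (Fin m) (Fin n) ℝ)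
    (hrank : X.rank = r) (A₁ : Matrix (Fin n) (Fin r) ℝ)
    (Y₁ : Matrix (Fin m) (Fin r) ℝ) (hY₁ : Y₁ = X * A₁)
    (A₂ : Matrix (Fin m) (Fin r) ℝ) (hA₂ : A₂ = Y₁)
    (Y₂ : Matrix (Fin n) (Fin r) ℝ) (hY₂ : Y₂ = Xᵀ * A₂)
    (hinv : IsUnit (A₂ᵀ * Y₁)) :
    Y₁ * (A₂ᵀ * Y₁)⁻¹ * Y₂ᵀ = X :=
  brp_exact_recovery_general X hrank A₁ Y₁ hY₁ A₂ Y₂ hY₂ hinv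
end
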